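/- Let β, β' ∈ V_1 ⊖ S_1. Then for all integers m, n, m', n' ≥ 0: ⟨β_{m,n}, β'_{m',n'}⟩ = 0 if m + n ≠ m' + n', and ⟨β_{m,n}, β'_{m',n'}⟩ = (−1)^{|n−n'|}·(L−1)^{m+n−|n−n'|}·⟨β, β'⟩ if m + n = m' + n', where ⟨·,·⟩ is the inner product of ℓ²(W). -/

import Mathlib

noncomputable section

open scoped ComplexInnerProductSpace

namespace UCoxMasa

/-- The universal Coxeter matrix on `Fin L`: all off-diagonal entries are `0` (representing ∞). -/
def Mat (L : ℕ) : CoxeterMatrix (Fin L) where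
  M := fun i j => if i = j then 1 else 0
  isSymm := by
    ext i j
    by_cases h : i = j <;> simp [Matrix.transpose, h, eq_comm]
  diagonal := fun i => by simp
  off_diagonal := fun i j h => by simp [h]

/-- The universal Coxeter group on `L` generators: free product of `L` copies of `ℤ/2ℤ`. -/
abbrev W (L : ℕ) : Type := (Mat L).Group

/-- The distinguished Coxeter system of `W L`. -/
def cs (L : ℕ) : CoxeterSystem (Mat L) (W L) := CoxeterMatrix.toCoxeterSystem (Mat L)

/-- The simple reflection associated to `i : Fin L`. -/
def σ {L : ℕ} (i : Fin L) : W L := (cs L).simple i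

/-- Word length on `W L` with respect to the generating set of simple reflections. -/
def len {L : ℕ} (w : W L) : ℕ := (cs L).length w

/-- The Hilbert space `ℓ²(W)`. -/
abbrev H (L : ℕ) : Type := lp (fun _ : W L => ℂ) 2

/-- The standard orthonormal basis vector `δ_w` of `ℓ²(W)`. -/
def δ {L : ℕ} (w : W L) : H L :=
  letI := Classical.decEq (W L)
  lp.single 2 w 1

/-- `V l`: the linear span of `{δ_w : ℓ(w) = l}`. -/
def V (L : ℕ) (l : ℕ) : Submodule ℂ (H L) :=
  Submodule.span ℂ {x : H L | ∃ w : W L, len w = l ∧ x = δ w}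

/-- `S_l`: the linear span of `q_l(h V_{l-1}) ∪ q_l(R_h V_{l-1})`,
given the projections `Q`, the operator `h` and the right operator `Rh`. -/
def Sl (L : ℕ) (Q : ℕ → (H L →L[ℂ] H L)) (h Rh : H L →L[ℂ] H L) (l : ℕ) :
    Submodule ℂ (H L) :=
  Submodule.span ℂ
    ({x : H L | ∃ y ∈ V L (l - 1), x = Q l (h y)} ∪
      {x : H L | ∃ y ∈ V L (l - 1), x = Q l (Rh y)})

end UCoxMasa

/-!
Write `β = ∑ c_s δ_s`; orthogonality to `∑_s δ_s ∈ S_1` says `∑ conj c_s = 0`. Modulo the span of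
basis vectors of smaller length, `T_u δ_y` is `δ_{uy}` if `ℓ(uy) = ℓ(u) + ℓ(y)` and `0` otherwise,
and the same holds for the right operators. Since the reduced words of `W` are exactly the words
without two equal adjacent letters, this gives `β_{m,n} = ∑ c_{l_m} δ_{w(l)}`, summed over
reduced words `l` of length `m + n + 1`. So `⟨β_{m,n}, β'_{m',n'}⟩ = ∑_l conj c_{l_m} c'_{l_{m'}}`.
The letters outside the positions between `m` and `m'` contribute `L - 1` choices each, while each
step between them replaces `c` by `t ↦ ∑_{s ≠ t} c_s = -c_t`, giving the sign `(-1)^{|m - m'|}`.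
-/

namespace CoxeterSystem

variable {B G H : Type*} [Group G] [Group H] {M : CoxeterMatrix B} (cs : CoxeterSystem M G)

theorem wordProd_map (e : G ≃* H) (ω : List B) : (cs.map e).wordProd ω = e (cs.wordProd ω) := by
  simp only [wordProd, map_list_prod, List.map_map]
  rfl

theorem length_map (e : G ≃* H) (w : G) : (cs.map e).length (e w) = cs.length w := by
  apply le_antisymm
  · obtain ⟨ω, hω, rfl⟩ := cs.exists_isReduced w
    rw [← wordProd_map, hω.eq]
    exact (cs.map e).length_wordProd_le ω
  · obtain ⟨ω, hω, hw⟩ := (cs.map e).exists_isReduced (e w)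
    rw [wordProd_map, e.apply_eq_iff_eq] at hw
    rw [hw, ← wordProd_map, hω.eq]
    exact cs.length_wordProd_le ω

theorem length_induction_left {P : G → Prop} (one : P 1)
    (mul : ∀ i w, cs.length w < cs.length (cs.simple i * w) → P w → P (cs.simple i * w))
    (w : G) : P w := by
  induction h : cs.length w using Nat.strong_induction_on generalizing w with
  | _ n ih =>
    by_cases hw : w = 1
    · exact hw ▸ one
    obtain ⟨i, hi⟩ := cs.exists_leftDescent_of_ne_one hw
    have := mul i (cs.simple i * w) (by rwa [simple_mul_simple_cancel_left])
      (ih _ (h ▸ hi) _ rfl)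
    rwa [simple_mul_simple_cancel_left] at this

variable {E : Type*} [AddCommGroup E] [Module ℂ E]

def spanOfLengthLT (e : G → E) (n : ℕ) : Submodule ℂ E :=
  Submodule.span ℂ (e '' {w | cs.length w < n})

variable {cs} {e : G → E}

theorem apply_mem_spanOfLengthLT {w : G} {n : ℕ} (h : cs.length w < n) :
    e w ∈ cs.spanOfLengthLT e n :=
  Submodule.subset_span ⟨w, h, rfl⟩

theorem map_mem_of_mem_spanOfLengthLT {F : Type*} [AddCommGroup F] [Module ℂ F]
    (f : E →ₗ[ℂ] F) {U : Submodule ℂ F} {n : ℕ} (hf : ∀ w, cs.length w < n → f (e w) ∈ U)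
    {x : E} (hx : x ∈ cs.spanOfLengthLT e n) : f x ∈ U := by
  refine (Submodule.span_le (p := U.comap f)).2 ?_ hx
  rintro _ ⟨w, hw, rfl⟩
  exact hf w hw

section Hecke

variable [TopologicalSpace E] {p : ℂ} {T : B → E →L[ℂ] E}
  (hT : ∀ s w, T s (e w) = if cs.length (cs.simple s * w) < cs.length w then
    e (cs.simple s * w) + p • e w else e (cs.simple s * w))
include hT

theorem hecke_mem_spanOfLengthLT (s : B) {n : ℕ} {x : E} (hx : x ∈ cs.spanOfLengthLT e n) :
    T s x ∈ cs.spanOfLengthLT e (n + 1) := by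
  refine map_mem_of_mem_spanOfLengthLT (T s : E →ₗ[ℂ] E) (fun w hw => ?_) hx
  have hsw : e (cs.simple s * w) ∈ cs.spanOfLengthLT e (n + 1) :=
    apply_mem_spanOfLengthLT (by have := cs.length_simple_mul w s; omega)
  rw [ContinuousLinearMap.coe_coe, hT]
  split_ifs
  · exact add_mem hsw (Submodule.smul_mem _ _ (apply_mem_spanOfLengthLT (by omega)))
  · exact hsw

theorem hecke_leading_sub_mem (s : B) {x : G} {k : ℕ} (hx : cs.length x ≤ k) :
    T s (if cs.length x = k then e x else 0) -
        (if cs.length (cs.simple s * x) = k + 1 then e (cs.simple s * x) else 0) ∈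
      cs.spanOfLengthLT e (k + 1) := by
  rcases cs.length_simple_mul x s with h | h
  · by_cases hk : cs.length x = k
    · rw [if_pos hk, if_pos (by omega), hT, if_neg (by omega), sub_self]
      exact zero_mem _
    · rw [if_neg hk, if_neg (by omega), map_zero, sub_zero]
      exact zero_mem _
  · rw [if_neg (show cs.length (cs.simple s * x) ≠ k + 1 by omega), sub_zero]
    split_ifs
    · rw [hT, if_pos (by omega)]
      exact add_mem (apply_mem_spanOfLengthLT (by omega))
        (Submodule.smul_mem _ _ (apply_mem_spanOfLengthLT (by omega)))
    · rw [map_zero]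
      exact zero_mem _

variable {Tw : G → E →L[ℂ] E} (hTw1 : Tw 1 = 1)
  (hTwrec : ∀ s w, cs.length (cs.simple s * w) < cs.length w → Tw w = T s ∘L Tw (cs.simple s * w))
include hTw1 hTwrec

omit hT hTw1 in
theorem heckeWord_simple_mul {s : B} {w : G} (h : cs.length w < cs.length (cs.simple s * w)) :
    Tw (cs.simple s * w) = T s ∘L Tw w := by
  have := hTwrec s (cs.simple s * w) (by rwa [simple_mul_simple_cancel_left])
  rwa [simple_mul_simple_cancel_left] at this

theorem heckeWord_mem_spanOfLengthLT (u : G) {n : ℕ} {x : E} (hx : x ∈ cs.spanOfLengthLT e n) :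
    Tw u x ∈ cs.spanOfLengthLT e (n + cs.length u) := by
  induction u using cs.length_induction_left generalizing n x with
  | one => simpa [hTw1] using hx
  | mul s u hlt ih =>
    rw [heckeWord_simple_mul hTwrec hlt, ContinuousLinearMap.comp_apply,
      (cs.not_isLeftDescent_iff.1 hlt.not_gt), ← add_assoc]
    exact hecke_mem_spanOfLengthLT hT s (ih hx)

theorem heckeWord_apply_sub_mem (u y : G) :
    Tw u (e y) - (if cs.length (u * y) = cs.length u + cs.length y then e (u * y) else 0) ∈
      cs.spanOfLengthLT e (cs.length u + cs.length y) := by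
  induction u using cs.length_induction_left with
  | one => simp [hTw1]
  | mul s u hlt ih =>
    have hsu := cs.not_isLeftDescent_iff.1 hlt.not_gt
    have hlead := hecke_leading_sub_mem hT s (cs.length_mul_le u y)
    rw [heckeWord_simple_mul hTwrec hlt, ContinuousLinearMap.comp_apply, mul_assoc, hsu,
      add_right_comm]
    simpa [map_sub] using add_mem (hecke_mem_spanOfLengthLT hT s ih) hlead

end Hecke
end CoxeterSystem

namespace UCoxMasa

section ReducedWords

variable {α : Type*}

theorem isChain_ne_cons_iff {i : α} {t : List α} :
    (i :: t).IsChain (· ≠ ·) ↔ t.head? ≠ some i ∧ t.IsChain (· ≠ ·) := by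
  rw [List.isChain_cons]
  exact and_congr_left' ⟨fun h hi => h i hi rfl, fun h y hy hiy => h (hiy ▸ hy)⟩

-- `default` when `k` is out of range
def letterAt [Inhabited α] (l : List α) (k : ℕ) : α := (l.drop k).headI

theorem letterAt_eq_getElem [Inhabited α] {l : List α} {k : ℕ} (h : k < l.length) :
    letterAt l k = l[k] := by
  rw [letterAt, List.drop_eq_getElem_cons h]
  rfl

@[simp]
theorem letterAt_cons_succ [Inhabited α] (i : α) (l : List α) (k : ℕ) :
    letterAt (i :: l) (k + 1) = letterAt l k :=
  rfl

theorem letterAt_take [Inhabited α] {l : List α} {k n : ℕ} (h : k < n) :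
    letterAt (l.take n) k = letterAt l k := by
  rw [letterAt, letterAt, List.drop_take, show n - k = n - k - 1 + 1 by omega]
  cases l.drop k <;> simp

theorem letterAt_reverse [Inhabited α] {l : List α} {k : ℕ} (h : k < l.length) :
    letterAt l.reverse k = letterAt l (l.length - 1 - k) := by
  rw [letterAt_eq_getElem (by simpa using h), letterAt_eq_getElem (by omega), List.getElem_reverse]

theorem letterAt_append_cons [Inhabited α] {a b : List α} {k : ℕ} (h : a.length = k) (s : α) :
    letterAt (a ++ s :: b) k = s := by
  simp [letterAt, ← h]

theorem take_append_letterAt_cons_drop [Inhabited α] {l : List α} {k : ℕ} (h : k < l.length) :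
    l.take k ++ letterAt l k :: l.drop (k + 1) = l := by
  rw [letterAt_eq_getElem h, ← List.drop_eq_getElem_cons h, List.take_append_drop]

variable [Fintype α] [DecidableEq α]

-- The reduced words of the free product of copies of `ℤ/2` indexed by `α`.
variable (α) in
def reducedWords : ℕ → Finset (List α)
  | 0 => {[]}
  | n + 1 => Finset.univ.biUnion fun i =>
      ((reducedWords n).filter fun t => t.head? ≠ some i).image (List.cons i)

theorem mem_reducedWords {n : ℕ} {l : List α} :
    l ∈ reducedWords α n ↔ l.length = n ∧ l.IsChain (· ≠ ·) := by
  induction n generalizing l with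
  | zero =>
    simp only [reducedWords, Finset.mem_singleton, List.length_eq_zero_iff, iff_self_and]
    rintro rfl
    exact .nil
  | succ n ih =>
    cases l with
    | nil => simp [reducedWords]
    | cons i t => simp [reducedWords, ih, isChain_ne_cons_iff, and_comm, and_left_comm]

theorem reverse_mem_reducedWords {n : ℕ} {l : List α} (h : l ∈ reducedWords α n) :
    l.reverse ∈ reducedWords α n := by
  rw [mem_reducedWords] at h ⊢
  simpa [List.isChain_reverse, ne_comm] using h

theorem sum_reducedWords_reverse {R : Type*} [AddCommMonoid R] (n : ℕ) (f : List α → R) :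
    ∑ l ∈ reducedWords α n, f l.reverse = ∑ l ∈ reducedWords α n, f l :=
  Finset.sum_nbij' List.reverse List.reverse (fun _ => reverse_mem_reducedWords)
    (fun _ => reverse_mem_reducedWords) (by simp) (by simp) (by simp)

theorem sum_reducedWords_succ {R : Type*} [AddCommMonoid R] (n : ℕ) (f : List α → R) :
    ∑ l ∈ reducedWords α (n + 1), f l =
      ∑ i, ∑ t ∈ (reducedWords α n).filter (fun t => t.head? ≠ some i), f (i :: t) := by
  rw [reducedWords, Finset.sum_biUnion]
  · exact Finset.sum_congr rfl fun i _ => Finset.sum_image fun _ _ _ _ h => List.cons_injective h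
  · intro i _ j _ hij
    simp only [Function.onFun, Finset.disjoint_left, Finset.mem_image]
    rintro _ ⟨t, _, rfl⟩ ⟨t', _, h⟩
    exact hij (List.cons_eq_cons.1 h).1.symm

variable [Inhabited α]

theorem sum_reducedWords_succ' {R : Type*} [AddCommMonoid R] {n : ℕ} (hn : n ≠ 0)
    (f : List α → R) :
    ∑ l ∈ reducedWords α (n + 1), f l =
      ∑ t ∈ reducedWords α n, ∑ i ∈ Finset.univ.erase t.headI, f (i :: t) := by
  rw [sum_reducedWords_succ]
  refine Finset.sum_comm' fun i t => ?_
  simp only [Finset.mem_filter, Finset.mem_univ, Finset.mem_erase, true_and, and_true]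
  rw [and_comm (a := i ≠ _)]
  refine and_congr_right fun ht => ?_
  obtain ⟨a, t, rfl⟩ := List.exists_cons_of_ne_nil
    (List.ne_nil_of_length_pos (by rw [(mem_reducedWords.1 ht).1]; omega))
  simp [eq_comm]

theorem sum_reducedWords_add_add_one {M : Type*} [AddCommMonoid M] (m n : ℕ)
    (F : List α → M) :
    ∑ l ∈ reducedWords α (m + n + 1), F l =
      ∑ a ∈ reducedWords α m, ∑ b ∈ reducedWords α n, ∑ s,
        if a ++ s :: b ∈ reducedWords α (m + n + 1) then F (a ++ s :: b) else 0 := by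
  set P : (List α × List α) × α → Prop :=
    fun x => x.1.1 ++ x.2 :: x.1.2 ∈ reducedWords α (m + n + 1)
  calc ∑ l ∈ reducedWords α (m + n + 1), F l
      = ∑ x ∈ ((reducedWords α m ×ˢ reducedWords α n) ×ˢ Finset.univ).filter P,
          F (x.1.1 ++ x.2 :: x.1.2) := by
        symm
        refine Finset.sum_nbij' (fun x => x.1.1 ++ x.2 :: x.1.2)
          (fun l => ((l.take m, l.drop (m + 1)), letterAt l m))
          (fun x hx => (Finset.mem_filter.1 hx).2) (fun l hl => ?_) (fun x hx => ?_)
          (fun l hl => ?_) (fun _ _ => rfl)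
        · obtain ⟨hlen, hchain⟩ := mem_reducedWords.1 hl
          simp only [P, Finset.mem_filter, Finset.mem_product, Finset.mem_univ, and_true,
            mem_reducedWords, List.length_take, List.length_drop,
            take_append_letterAt_cons_drop (show m < l.length by omega)]
          exact ⟨⟨⟨by omega, hchain.take m⟩, by omega, hchain.drop (m + 1)⟩, hlen, hchain⟩
        · obtain ⟨⟨a, b⟩, s⟩ := x
          have ha : a.length = m := (mem_reducedWords.1 (by simp_all : a ∈ reducedWords α m)).1
          simp [letterAt_append_cons rfl, ← ha, List.drop_append]
        · obtain ⟨hlen, -⟩ := mem_reducedWords.1 hl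
          exact take_append_letterAt_cons_drop (by omega)
    _ = _ := by rw [Finset.sum_filter, Finset.sum_product, Finset.sum_product]

variable {R : Type*} [CommRing R]

theorem sum_reducedWords_drop {m : ℕ} (hm : m ≠ 0) (k : ℕ) (G : List α → R) :
    ∑ l ∈ reducedWords α (k + m), G (l.drop k) =
      ((Fintype.card α : R) - 1) ^ k * ∑ u ∈ reducedWords α m, G u := by
  induction k with
  | zero => simp
  | succ k ih =>
    rw [show k + 1 + m = k + m + 1 by omega, sum_reducedWords_succ' (by omega)]
    simp only [List.drop_succ_cons, Finset.sum_const, Finset.card_erase_of_mem (Finset.mem_univ _),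
      Finset.card_univ, nsmul_eq_mul, Nat.cast_pred Fintype.card_pos, ← Finset.mul_sum, ih]
    ring

theorem sum_reducedWords_take (m k : ℕ) (hm : m ≠ 0) (G : List α → R) :
    ∑ l ∈ reducedWords α (m + k), G (l.take m) =
      ((Fintype.card α : R) - 1) ^ k * ∑ u ∈ reducedWords α m, G u := by
  rw [← sum_reducedWords_reverse, ← sum_reducedWords_reverse m]
  calc ∑ l ∈ reducedWords α (m + k), G (l.reverse.take m)
      = ∑ l ∈ reducedWords α (k + m), (fun u => G u.reverse) (l.drop k) := by
        rw [add_comm]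
        refine Finset.sum_congr rfl fun l hl => ?_
        rw [List.take_reverse, (mem_reducedWords.1 hl).1, Nat.add_sub_cancel]
    _ = _ := sum_reducedWords_drop hm k (fun u => G u.reverse)

theorem sum_headI_mul_letterAt {c : α → R} (hc : ∑ t, c t = 0) (e : α → R) (d : ℕ) :
    ∑ u ∈ reducedWords α (d + 1), c u.headI * e (letterAt u d) = (-1) ^ d * ∑ t, c t * e t := by
  induction d generalizing c with
  | zero =>
    rw [sum_reducedWords_succ]
    simp [reducedWords, letterAt, Finset.filter_singleton]
  | succ d ih =>
    -- the letter preceding `a` ranges over the other letters, and `∑_{i ≠ a} c i = -c a`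
    have hsum (a : α) : ∑ i ∈ Finset.univ.erase a, c i = -c a := by
      rw [Finset.sum_erase_eq_sub (Finset.mem_univ a), hc, zero_sub]
    rw [sum_reducedWords_succ' (by omega)]
    simp only [List.headI_cons, letterAt_cons_succ, ← Finset.sum_mul, hsum]
    rw [ih (c := fun t => -c t) (by simp [hc]), pow_succ]
    simp [Finset.sum_neg_distrib]

theorem sum_letterAt_mul_letterAt_of_le {c : α → R} (hc : ∑ t, c t = 0) (e : α → R)
    {N i j : ℕ} (hij : i ≤ j) (hjN : j ≤ N) :
    ∑ l ∈ reducedWords α (N + 1), c (letterAt l i) * e (letterAt l j) =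
      (-1) ^ (j - i) * ((Fintype.card α : R) - 1) ^ (N - (j - i)) * ∑ t, c t * e t := by
  -- Each letter before position `i` or after position `j` contributes a factor `card α - 1`.
  set G : List α → R := fun u => c u.headI * e (letterAt u (j - i))
  have hdrop (l : List α) : c (letterAt l i) * e (letterAt l j) = G (l.drop i) := by
    simp only [G, letterAt, List.drop_drop, Nat.add_sub_cancel' hij]
  have htake (u : List α) : G u = G (u.take (j - i + 1)) := by
    have h0 := letterAt_take (l := u) (Nat.succ_pos (j - i))
    simp only [letterAt, List.drop_zero] at h0
    simp only [G, h0, letterAt_take (Nat.lt_succ_self _)]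
  calc ∑ l ∈ reducedWords α (N + 1), c (letterAt l i) * e (letterAt l j)
      = ∑ l ∈ reducedWords α (i + (N + 1 - i)), G (l.drop i) := by
        rw [Nat.add_sub_cancel' (by omega)]
        exact Finset.sum_congr rfl fun l _ => hdrop l
    _ = ((Fintype.card α : R) - 1) ^ i *
          ∑ u ∈ reducedWords α ((j - i + 1) + (N - j)), G (u.take (j - i + 1)) := by
        rw [sum_reducedWords_drop (by omega), show N + 1 - i = j - i + 1 + (N - j) by omega]
        simp only [← htake]
    _ = (-1) ^ (j - i) * ((Fintype.card α : R) - 1) ^ (i + (N - j)) * ∑ t, c t * e t := by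
        rw [sum_reducedWords_take _ _ (by omega), sum_headI_mul_letterAt hc]
        ring
    _ = _ := by rw [show i + (N - j) = N - (j - i) by omega]

theorem sum_letterAt_mul_letterAt {c : α → R} (hc : ∑ t, c t = 0) (e : α → R)
    {N i j : ℕ} (hi : i ≤ N) (hj : j ≤ N) :
    ∑ l ∈ reducedWords α (N + 1), c (letterAt l i) * e (letterAt l j) =
      (-1) ^ ((i : ℤ) - j).natAbs * ((Fintype.card α : R) - 1) ^ (N - ((i : ℤ) - j).natAbs) *
        ∑ t, c t * e t := by
  rcases le_total i j with hij | hji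
  · rw [sum_letterAt_mul_letterAt_of_le hc e hij hj, show ((i : ℤ) - j).natAbs = j - i by omega]
  · -- reversing the words exchanges the two positions
    rw [← sum_reducedWords_reverse]
    have hrev : ∀ l ∈ reducedWords α (N + 1),
        c (letterAt l.reverse i) * e (letterAt l.reverse j) =
          c (letterAt l (N - i)) * e (letterAt l (N - j)) := by
      intro l hl
      rw [letterAt_reverse, letterAt_reverse, (mem_reducedWords.1 hl).1] <;>
        simp [(mem_reducedWords.1 hl).1] <;> omega
    rw [Finset.sum_congr rfl hrev, sum_letterAt_mul_letterAt_of_le hc e (by omega) (by omega),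
      show ((i : ℤ) - j).natAbs = N - j - (N - i) by omega]

end ReducedWords

section UniversalCoxeterGroup

open CoxeterSystem MulOpposite

variable {L : ℕ}

abbrev ReducedWord (L : ℕ) : Type := {l : List (Fin L) // l.IsChain (· ≠ ·)}

def consCancel (i : Fin L) (l : List (Fin L)) : List (Fin L) :=
  if l.head? = some i then l.tail else i :: l

theorem isChain_consCancel (i : Fin L) {l : List (Fin L)} (hl : l.IsChain (· ≠ ·)) :
    (consCancel i l).IsChain (· ≠ ·) := by
  unfold consCancel
  split_ifs with h
  · exact hl.tail
  · exact isChain_ne_cons_iff.2 ⟨h, hl⟩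

theorem consCancel_consCancel (i : Fin L) {l : List (Fin L)} (hl : l.IsChain (· ≠ ·)) :
    consCancel i (consCancel i l) = l := by
  by_cases h : l.head? = some i
  · obtain ⟨t, rfl⟩ := List.head?_eq_some_iff.1 h
    simp [consCancel, (isChain_ne_cons_iff.1 hl).1]
  · simp [consCancel, h]

def consCancelPerm (i : Fin L) : Equiv.Perm (ReducedWord L) :=
  Function.Involutive.toPerm (fun l => ⟨consCancel i l.1, isChain_consCancel i l.2⟩)
    fun l => Subtype.ext (consCancel_consCancel i l.2)

theorem isLiftable_consCancelPerm : (Mat L).IsLiftable (consCancelPerm (L := L)) := by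
  intro i j
  by_cases h : i = j
  · subst h
    simp only [Mat, if_pos, pow_one]
    exact Equiv.ext fun l => Subtype.ext (consCancel_consCancel i l.2)
  · simp [Mat, h]

-- `σ i` acts on reduced words by `consCancel i`; the orbit of the empty word inverts `wordProd`.
def normalForm (w : W L) : List (Fin L) :=
  ((cs L).lift ⟨consCancelPerm, isLiftable_consCancelPerm⟩ w ⟨[], .nil⟩).1

theorem normalForm_wordProd {l : List (Fin L)} (hl : l.IsChain (· ≠ ·)) :
    normalForm ((cs L).wordProd l) = l := by
  induction l with
  | nil => simp [normalForm]
  | cons i t ih =>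
    obtain ⟨hi, ht⟩ := isChain_ne_cons_iff.1 hl
    have := ih ht
    simp only [normalForm, wordProd_cons, map_mul, Equiv.Perm.mul_apply,
      lift_apply_simple] at this ⊢
    simp [consCancelPerm, this, consCancel, hi]

theorem wordProd_injOn : Set.InjOn (cs L).wordProd {l | l.IsChain (· ≠ ·)} :=
  fun a ha b hb h => by rw [← normalForm_wordProd ha, h, normalForm_wordProd hb]

theorem isChain_of_isReduced {l : List (Fin L)} (h : (cs L).IsReduced l) :
    l.IsChain (· ≠ ·) := by
  induction l with
  | nil => exact .nil
  | cons i t ih =>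
    refine isChain_ne_cons_iff.2 ⟨fun hi => ?_, ih (by simpa using h.drop 1)⟩
    obtain ⟨t, rfl⟩ := List.head?_eq_some_iff.1 hi
    simpa [CoxeterSystem.IsReduced, wordProd_cons] using h.take 2

theorem len_wordProd_eq_length_iff {l : List (Fin L)} :
    len ((cs L).wordProd l) = l.length ↔ l.IsChain (· ≠ ·) := by
  refine ⟨isChain_of_isReduced, fun hl => ?_⟩
  obtain ⟨ω, hω, h⟩ := (cs L).exists_isReduced ((cs L).wordProd l)
  rw [len, h, hω.eq, wordProd_injOn (isChain_of_isReduced hω) hl h.symm]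

theorem len_wordProd_of_mem_reducedWords {n : ℕ} {l : List (Fin L)}
    (hl : l ∈ reducedWords (Fin L) n) : len ((cs L).wordProd l) = n := by
  obtain ⟨hlen, hchain⟩ := mem_reducedWords.1 hl
  rw [len_wordProd_eq_length_iff.2 hchain, hlen]

theorem wordProd_injective_reducedWords (n : ℕ) :
    Function.Injective fun l : reducedWords (Fin L) n => (cs L).wordProd l :=
  fun a b h => Subtype.ext <|
    wordProd_injOn (mem_reducedWords.1 a.2).2 (mem_reducedWords.1 b.2).2 h

def reducedWordsEquivSphere (n : ℕ) : reducedWords (Fin L) n ≃ {w : W L // len w = n} :=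
  Equiv.ofBijective (fun l => ⟨(cs L).wordProd l, len_wordProd_of_mem_reducedWords l.2⟩) <| by
    refine ⟨fun a b h => wordProd_injective_reducedWords n (congrArg Subtype.val h), fun w => ?_⟩
    obtain ⟨ω, hω, h⟩ := (cs L).exists_isReduced w.1
    refine ⟨⟨ω, mem_reducedWords.2 ⟨?_, isChain_of_isReduced hω⟩⟩, Subtype.ext h.symm⟩
    rw [← hω.eq, ← h]
    exact w.2

theorem tsum_sphere {E : Type*} [AddCommMonoid E] [TopologicalSpace E] (f : W L → E) (n : ℕ) :
    ∑' w : {w : W L // len w = n}, f w = ∑ l ∈ reducedWords (Fin L) n, f ((cs L).wordProd l) := by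
  rw [← (reducedWordsEquivSphere n).tsum_eq]
  exact Finset.tsum_subtype _ fun l => f ((cs L).wordProd l)

theorem orthonormal_δ : Orthonormal ℂ (δ : W L → H L) := by
  classical
  rw [orthonormal_iff_ite]
  intro v w
  unfold δ
  rw [lp.inner_single_left]
  simp [Pi.single_apply]

theorem σ_injective : Function.Injective (σ : Fin L → W L) := fun i j h => by
  simpa using wordProd_injOn (List.isChain_singleton i) (List.isChain_singleton j)
    (by simpa [σ] using h)

theorem inner_sum_δ_σ (c c' : Fin L → ℂ) :
    ⟪∑ s, c s • δ (σ s), ∑ s, c' s • δ (σ s)⟫ = ∑ s, (starRingEnd ℂ) (c s) * c' s :=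
  (orthonormal_δ.comp _ σ_injective).inner_sum c c' Finset.univ

theorem inner_sum_reducedWords (n : ℕ) (f g : List (Fin L) → ℂ) :
    ⟪∑ l ∈ reducedWords (Fin L) n, f l • δ ((cs L).wordProd l),
        ∑ l ∈ reducedWords (Fin L) n, g l • δ ((cs L).wordProd l)⟫ =
      ∑ l ∈ reducedWords (Fin L) n, (starRingEnd ℂ) (f l) * g l := by
  have hv := orthonormal_δ.comp _ (wordProd_injective_reducedWords (L := L) n)
  convert hv.inner_sum (fun l => f l) (fun l => g l) Finset.univ using 2
  · rfl
  all_goals exact (Finset.sum_coe_sort (reducedWords (Fin L) n) _).symm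

theorem sum_mem_V (n : ℕ) (f : List (Fin L) → ℂ) :
    ∑ l ∈ reducedWords (Fin L) n, f l • δ ((cs L).wordProd l) ∈ V L n :=
  Submodule.sum_mem _ fun _ hl => Submodule.smul_mem _ _
    (Submodule.subset_span ⟨_, len_wordProd_of_mem_reducedWords hl, rfl⟩)

theorem V_isOrtho {a b : ℕ} (h : a ≠ b) : V L a ⟂ V L b := by
  refine Submodule.isOrtho_span.2 ?_
  rintro _ ⟨v, hv, rfl⟩ _ ⟨w, hw, rfl⟩
  exact orthonormal_δ.2 fun hvw => h (hv ▸ hvw ▸ hw)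

theorem exists_eq_sum_of_mem_V_one {β : H L} (hβ : β ∈ V L 1) :
    ∃ c : Fin L → ℂ, β = ∑ s, c s • δ (σ s) := by
  have hV : {x : H L | ∃ w : W L, len w = 1 ∧ x = δ w} = Set.range fun s => δ (σ s) := by
    ext x
    simp only [Set.mem_ofPred_eq, Set.mem_range, len, (cs L).length_eq_one_iff]
    constructor
    · rintro ⟨_, ⟨s, rfl⟩, rfl⟩
      exact ⟨s, rfl⟩
    · rintro ⟨s, rfl⟩
      exact ⟨σ s, ⟨s, rfl⟩, rfl⟩
  rw [V, hV, Submodule.mem_span_range_iff_exists_fun] at hβ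
  obtain ⟨c, hc⟩ := hβ
  exact ⟨c, hc.symm⟩

-- Through inversion, left multiplication by `σ s` in the opposite group is right multiplication
-- in `W L`, so the right operators become left ones.
def csOp (L : ℕ) : CoxeterSystem (Mat L) (W L)ᵐᵒᵖ := (cs L).map (MulEquiv.inv' (W L))

theorem csOp_length (x : (W L)ᵐᵒᵖ) : (csOp L).length x = len x.unop := by
  simpa [csOp, len] using (cs L).length_map (MulEquiv.inv' (W L)) x.unop⁻¹

theorem csOp_simple_mul (s : Fin L) (x : (W L)ᵐᵒᵖ) : (csOp L).simple s * x = op (x.unop * σ s) := by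
  simp [csOp, σ]

theorem spanOfLengthLT_csOp (n : ℕ) :
    (csOp L).spanOfLengthLT (fun x => δ x.unop) n = (cs L).spanOfLengthLT δ n := by
  unfold spanOfLengthLT
  congr 1
  ext v
  simp only [Set.mem_image, Set.mem_ofPred_eq, csOp_length]
  exact ⟨fun ⟨x, hx, h⟩ => ⟨x.unop, hx, h⟩, fun ⟨w, hw, h⟩ => ⟨op w, hw, h⟩⟩

section Operators

variable {Q : ℕ → H L →L[ℂ] H L}
  (hQ : ∀ (l : ℕ) (w : W L), Q l (δ w) = if len w = l then δ w else 0)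
include hQ

theorem Q_eq_zero_of_mem {n k : ℕ} (hnk : n ≤ k) {x : H L}
    (hx : x ∈ (cs L).spanOfLengthLT δ n) : Q k x = 0 := by
  refine (Submodule.mem_bot ℂ).1 <| (cs L).map_mem_of_mem_spanOfLengthLT (Q k : H L →ₗ[ℂ] H L)
    (fun w hw => ?_) hx
  rw [ContinuousLinearMap.coe_coe, hQ, if_neg (by unfold len; omega)]
  exact zero_mem _

theorem Q_eq_of_sub_mem {k : ℕ} {x : H L} {z : W L}
    (hx : x - (if len z = k then δ z else 0) ∈ (cs L).spanOfLengthLT δ k) :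
    Q k x = if len z = k then δ z else 0 := by
  have h0 := Q_eq_zero_of_mem hQ le_rfl hx
  rw [map_sub, sub_eq_zero] at h0
  rw [h0]
  split_ifs with h <;> simp [hQ, h]

variable {p : ℝ} {T : Fin L → H L →L[ℂ] H L}
  (hT : ∀ (s : Fin L) (w : W L),
    T s (δ w) = if len (σ s * w) < len w then δ (σ s * w) + (p : ℂ) • δ w else δ (σ s * w))
  {Tw : W L → H L →L[ℂ] H L} (hTw1 : Tw 1 = 1)
  (hTwrec : ∀ (s : Fin L) (w : W L), len (σ s * w) < len w → Tw w = T s ∘L Tw (σ s * w))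
  {Tr : Fin L → H L →L[ℂ] H L}
  (hTr : ∀ (s : Fin L) (w : W L),
    Tr s (δ w) = if len (w * σ s) < len w then δ (w * σ s) + (p : ℂ) • δ w else δ (w * σ s))
  {Twr : W L → H L →L[ℂ] H L} (hTwr1 : Twr 1 = 1)
  (hTwrrec : ∀ (s : Fin L) (w : W L), len (w * σ s) < len w → Twr w = Tr s ∘L Twr (w * σ s))

omit hQ in
include hTr hTwr1 hTwrrec in
theorem heckeWordRight_apply_sub_mem (w y : W L) :
    Twr w (δ y) - (if len (y * w) = len y + len w then δ (y * w) else 0) ∈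
      (cs L).spanOfLengthLT δ (len y + len w) := by
  have h := (csOp L).heckeWord_apply_sub_mem (e := fun x => δ x.unop) (p := p) (T := Tr)
    (Tw := fun x => Twr x.unop)
    (fun s x => by simpa [csOp_length, csOp_simple_mul] using hTr s x.unop)
    hTwr1 (fun s x hx => by
      rw [csOp_simple_mul, csOp_length, csOp_length] at hx
      simpa [csOp_simple_mul] using hTwrrec s x.unop hx)
    (op w) (op y)
  simpa [csOp_length, spanOfLengthLT_csOp, add_comm] using h

include hT hTw1 hTwrec hTr hTwr1 hTwrrec in
theorem Q_heckeWord_heckeWordRight (u y w : W L) :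
    Q (len u + len y + len w) (Tw u (Twr w (δ y))) =
      if len (u * y * w) = len u + len y + len w then δ (u * y * w) else 0 := by
  refine Q_eq_of_sub_mem hQ ?_
  have hright : Tw u (Twr w (δ y) - if len (y * w) = len y + len w then δ (y * w) else 0) ∈
      (cs L).spanOfLengthLT δ (len y + len w + len u) :=
    (cs L).heckeWord_mem_spanOfLengthLT hT hTw1 hTwrec u
      (heckeWordRight_apply_sub_mem hTr hTwr1 hTwrrec w y)
  rw [map_sub, show len y + len w + len u = len u + len y + len w by ring] at hright
  by_cases hyw : len (y * w) = len y + len w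
  · have hleft : Tw u (δ (y * w)) -
        (if len (u * (y * w)) = len u + len (y * w) then δ (u * (y * w)) else 0) ∈
        (cs L).spanOfLengthLT δ (len u + len (y * w)) :=
      (cs L).heckeWord_apply_sub_mem hT hTw1 hTwrec u (y * w)
    rw [if_pos hyw] at hright
    rw [← mul_assoc, hyw, ← add_assoc] at hleft
    simpa using add_mem hright hleft
  · have hlen : len (u * y * w) ≠ len u + len y + len w := by
      have h1 : len (u * y * w) ≤ len u + len (y * w) := mul_assoc u y w ▸ (cs L).length_mul_le _ _
      have h2 : len (y * w) ≤ len y + len w := (cs L).length_mul_le y w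
      omega
    rw [if_neg hyw, map_zero, sub_zero] at hright
    rwa [if_neg hlen, sub_zero]

include hT hTw1 hTwrec hTr hTwr1 hTwrrec in
theorem Q_heckeWord_heckeWordRight_δ_σ {m n : ℕ} {a b : List (Fin L)}
    (ha : a ∈ reducedWords (Fin L) m) (hb : b ∈ reducedWords (Fin L) n) (s : Fin L) :
    Q (m + n + 1) (Tw ((cs L).wordProd a) (Twr ((cs L).wordProd b) (δ (σ s)))) =
      if a ++ s :: b ∈ reducedWords (Fin L) (m + n + 1) then δ ((cs L).wordProd (a ++ s :: b))
      else 0 := by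
  have hlen : (a ++ s :: b).length = m + n + 1 := by
    simp [(mem_reducedWords.1 ha).1, (mem_reducedWords.1 hb).1]
    ring
  have h := Q_heckeWord_heckeWordRight hQ hT hTw1 hTwrec hTr hTwr1 hTwrrec
    ((cs L).wordProd a) (σ s) ((cs L).wordProd b)
  rw [len_wordProd_of_mem_reducedWords ha, len_wordProd_of_mem_reducedWords hb,
    show len (σ s) = 1 from (cs L).length_simple s, show m + 1 + n = m + n + 1 by ring,
    show (cs L).wordProd a * σ s * (cs L).wordProd b = (cs L).wordProd (a ++ s :: b) by
      rw [wordProd_append, wordProd_cons, mul_assoc]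
      rfl] at h
  have hmem : a ++ s :: b ∈ reducedWords (Fin L) (m + n + 1) ↔
      len ((cs L).wordProd (a ++ s :: b)) = m + n + 1 := by
    rw [mem_reducedWords, ← hlen, len_wordProd_eq_length_iff, and_iff_right rfl]
  simpa only [hmem] using h

include hT hTw1 hTwrec hTr hTwr1 hTwrrec in
theorem Q_hn_hnr_sum_smul_δ_σ [Inhabited (Fin L)] {hn hnr : ℕ → H L →L[ℂ] H L}
    (hhn : ∀ n : ℕ, hn n = ∑' w : {w : W L // len w = n}, Tw (w : W L))
    (hhnr : ∀ n : ℕ, hnr n = ∑' w : {w : W L // len w = n}, Twr (w : W L))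
    (c : Fin L → ℂ) (m n : ℕ) :
    Q (m + n + 1) (hn m (hnr n (∑ s, c s • δ (σ s)))) =
      ∑ l ∈ reducedWords (Fin L) (m + n + 1), c (letterAt l m) • δ ((cs L).wordProd l) := by
  set X : List (Fin L) → List (Fin L) → Fin L → H L := fun a b s =>
    Q (m + n + 1) (Tw ((cs L).wordProd a) (Twr ((cs L).wordProd b) (δ (σ s))))
  calc Q (m + n + 1) (hn m (hnr n (∑ s, c s • δ (σ s))))
      = ∑ s, ∑ a ∈ reducedWords (Fin L) m, ∑ b ∈ reducedWords (Fin L) n, c s • X a b s := by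
        simp only [X, hhn, hhnr, tsum_sphere, _root_.sum_apply, map_sum, map_smul,
          Finset.smul_sum]
        exact Finset.sum_congr rfl fun _ _ => Finset.sum_comm
    _ = ∑ a ∈ reducedWords (Fin L) m, ∑ b ∈ reducedWords (Fin L) n, ∑ s, c s • X a b s := by
        rw [Finset.sum_comm]
        exact Finset.sum_congr rfl fun _ _ => Finset.sum_comm
    _ = _ := by
      rw [sum_reducedWords_add_add_one]
      refine Finset.sum_congr rfl fun a ha => Finset.sum_congr rfl fun b hb =>
        Finset.sum_congr rfl fun s _ => ?_
      simp only [X]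
      rw [Q_heckeWord_heckeWordRight_δ_σ hQ hT hTw1 hTwrec hTr hTwr1 hTwrrec ha hb,
        letterAt_append_cons (mem_reducedWords.1 ha).1]
      split_ifs <;> simp

include hT in
theorem sum_δ_σ_mem_Sl {h : H L →L[ℂ] H L} (hh : h = ∑ s, T s) (Rh : H L →L[ℂ] H L) :
    ∑ s, δ (σ s) ∈ Sl L Q h Rh 1 := by
  refine Submodule.subset_span (Or.inl ⟨δ 1, Submodule.subset_span ⟨1, (cs L).length_one, rfl⟩, ?_⟩)
  have hσ (s : Fin L) : len (σ s) = 1 := (cs L).length_simple s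
  have hTs (s : Fin L) : T s (δ 1) = δ (σ s) := by
    rw [hT, mul_one, if_neg (by simp [len])]
  simp [hh, hTs, hQ, hσ]

end Operators

end UniversalCoxeterGroup

theorem statement13_general
    (L : ℕ) (hL : 3 ≤ L) (p : ℝ)
    (T : Fin L → H L →L[ℂ] H L)
    (hT : ∀ (s : Fin L) (w : W L),
      T s (δ w) =
        if len (σ s * w) < len w then δ (σ s * w) + (p : ℂ) • δ w else δ (σ s * w))
    (h : H L →L[ℂ] H L) (hh : h = ∑ s, T s)
    (Tw : W L → H L →L[ℂ] H L) (hTw1 : Tw 1 = 1)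
    (hTwrec : ∀ (s : Fin L) (w : W L), len (σ s * w) < len w →
      Tw w = T s ∘L Tw (σ s * w))
    (hn : ℕ → H L →L[ℂ] H L)
    (hhn : ∀ n : ℕ, hn n = ∑' w : {w : W L // len w = n}, Tw (w : W L))
    (Tr : Fin L → H L →L[ℂ] H L)
    (hTr : ∀ (s : Fin L) (w : W L),
      Tr s (δ w) =
        if len (w * σ s) < len w then δ (w * σ s) + (p : ℂ) • δ w else δ (w * σ s))
    (Rh : H L →L[ℂ] H L)
    (Twr : W L → H L →L[ℂ] H L) (hTwr1 : Twr 1 = 1)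
    (hTwrrec : ∀ (s : Fin L) (w : W L), len (w * σ s) < len w →
      Twr w = Tr s ∘L Twr (w * σ s))
    (hnr : ℕ → H L →L[ℂ] H L)
    (hhnr : ∀ n : ℕ, hnr n = ∑' w : {w : W L // len w = n}, Twr (w : W L))
    (Q : ℕ → H L →L[ℂ] H L)
    (hQ : ∀ (l : ℕ) (w : W L), Q l (δ w) = if len w = l then δ w else 0)
    (β : H L)
    (hβmem : β ∈ V L 1)
    (hβperp : ∀ y ∈ Sl L Q h Rh 1, ⟪β, y⟫ = 0)
    (β' : H L)
    (hβ'mem : β' ∈ V L 1)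
    (m n m' n' : ℕ) :
    (m + n ≠ m' + n' →
      ⟪Q (m + n + 1) (hn m (hnr n β)), Q (m' + n' + 1) (hn m' (hnr n' β'))⟫ = 0)
    ∧ (m + n = m' + n' →
      ⟪Q (m + n + 1) (hn m (hnr n β)), Q (m' + n' + 1) (hn m' (hnr n' β'))⟫ =
        (((-1 : ℂ) ^ ((n : ℤ) - (n' : ℤ)).natAbs) *
          ((L : ℂ) - 1) ^ (m + n - ((n : ℤ) - (n' : ℤ)).natAbs)) * ⟪β, β'⟫) := by
  have : Inhabited (Fin L) := ⟨⟨0, by omega⟩⟩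
  obtain ⟨c, rfl⟩ := exists_eq_sum_of_mem_V_one hβmem
  obtain ⟨c', rfl⟩ := exists_eq_sum_of_mem_V_one hβ'mem
  have hc : ∑ s, (starRingEnd ℂ) (c s) = 0 := by
    have h0 := hβperp _ (sum_δ_σ_mem_Sl hQ hT hh Rh)
    rw [← Finset.sum_congr rfl fun s _ => one_smul ℂ (δ (σ s)), inner_sum_δ_σ] at h0
    simpa using h0
  rw [Q_hn_hnr_sum_smul_δ_σ hQ hT hTw1 hTwrec hTr hTwr1 hTwrrec hhn hhnr,
    Q_hn_hnr_sum_smul_δ_σ hQ hT hTw1 hTwrec hTr hTwr1 hTwrrec hhn hhnr]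
  refine ⟨fun hne => (V_isOrtho (by omega)).inner_eq (sum_mem_V _ _) (sum_mem_V _ _),
    fun heq => ?_⟩
  rw [← heq, inner_sum_reducedWords, sum_letterAt_mul_letterAt hc _ (by omega) (by omega),
    inner_sum_δ_σ, Fintype.card_fin, show ((m : ℤ) - m').natAbs = ((n : ℤ) - n').natAbs by omega]

theorem statement13
    (L : ℕ) (hL : 3 ≤ L) (q p : ℝ) (hq : 0 < q) (hq1 : q ≤ 1)
    (hp : p = (q - 1) / Real.sqrt q)
    (T : Fin L → H L →L[ℂ] H L)
    (hT : ∀ (s : Fin L) (w : W L),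
      T s (δ w) =
        if len (σ s * w) < len w then δ (σ s * w) + (p : ℂ) • δ w else δ (σ s * w))
    (h : H L →L[ℂ] H L) (hh : h = ∑ s, T s)
    (Tw : W L → H L →L[ℂ] H L) (hTw1 : Tw 1 = 1)
    (hTwrec : ∀ (s : Fin L) (w : W L), len (σ s * w) < len w →
      Tw w = T s ∘L Tw (σ s * w))
    (hn : ℕ → H L →L[ℂ] H L)
    (hhn : ∀ n : ℕ, hn n = ∑' w : {w : W L // len w = n}, Tw (w : W L))
    (Tr : Fin L → H L →L[ℂ] H L)
    (hTr : ∀ (s : Fin L) (w : W L),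
      Tr s (δ w) =
        if len (w * σ s) < len w then δ (w * σ s) + (p : ℂ) • δ w else δ (w * σ s))
    (Rh : H L →L[ℂ] H L) (hRh : Rh = ∑ s, Tr s)
    (Twr : W L → H L →L[ℂ] H L) (hTwr1 : Twr 1 = 1)
    (hTwrrec : ∀ (s : Fin L) (w : W L), len (w * σ s) < len w →
      Twr w = Tr s ∘L Twr (w * σ s))
    (hnr : ℕ → H L →L[ℂ] H L)
    (hhnr : ∀ n : ℕ, hnr n = ∑' w : {w : W L // len w = n}, Twr (w : W L))
    (Q : ℕ → H L →L[ℂ] H L)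
    (hQ : ∀ (l : ℕ) (w : W L), Q l (δ w) = if len w = l then δ w else 0)
    (β : H L)
    (hβmem : β ∈ V L 1)
    (hβperp : ∀ y ∈ Sl L Q h Rh 1, ⟪β, y⟫ = 0)
    (β' : H L)
    (hβ'mem : β' ∈ V L 1)
    (hβ'perp : ∀ y ∈ Sl L Q h Rh 1, ⟪β', y⟫ = 0)
    (m n m' n' : ℕ) :
    (m + n ≠ m' + n' →
      ⟪Q (m + n + 1) (hn m (hnr n β)), Q (m' + n' + 1) (hn m' (hnr n' β'))⟫ = 0)
    ∧ (m + n = m' + n' →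
      ⟪Q (m + n + 1) (hn m (hnr n β)), Q (m' + n' + 1) (hn m' (hnr n' β'))⟫ =
        (((-1 : ℂ) ^ ((n : ℤ) - (n' : ℤ)).natAbs) *
          ((L : ℂ) - 1) ^ (m + n - ((n : ℤ) - (n' : ℤ)).natAbs)) * ⟪β, β'⟫) :=
  statement13_general L hL p T hT h hh Tw hTw1 hTwrec hn hhn Tr hTr Rh Twr hTwr1 hTwrrec hnr hhnr Q
    hQ β hβmem hβperp β' hβ'mem m n m' n'

end UCoxMasa
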